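/- arXiv:2104.01664 — 3 statements merged into one kernel-verified Lean document; each statement's English description precedes it below -/
import Mathlib

section
/- Let n ≥ 2 and ℓ ≥ 1 be natural numbers, and set x := ((ℓ+1)·log₂ n + ℓ² + 1)^ℓ (a real number). Then (log₂ n + log₂ x + 1)^ℓ ≤ x. -/
lemma aux_pow (ℓ : ℕ) (h : 1 ≤ ℓ) : ℓ ^ 2 + ℓ + 2 ≤ 2 ^ (ℓ + 1) := by
  induction ℓ with
  | zero => omega
  | succ k ih =>
    by_cases hk : k = 0
    · subst hk; norm_num
    · have hk1 : 1 ≤ k := Nat.one_le_iff_ne_zero.2 hk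
      have ihk := ih hk1
      have h2 : 2 ^ (k + 1 + 1) = 2 * 2 ^ (k + 1) := by ring
      nlinarith [ihk, hk1]

theorem substitution_upper (n ℓ : ℕ) (hn : 2 ≤ n) (hℓ : 1 ≤ ℓ)
    (x : ℝ) (hx : x = (((ℓ : ℝ) + 1) * Real.logb 2 n + (ℓ : ℝ) ^ 2 + 1) ^ ℓ) :
    (Real.logb 2 n + Real.logb 2 x + 1) ^ ℓ ≤ x := by
  set L : ℝ := Real.logb 2 n with hLdef
  have hℓ1 : (1 : ℝ) ≤ (ℓ : ℝ) := by exact_mod_cast hℓ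
  have hL : (1 : ℝ) ≤ L := by
    have : Real.logb 2 2 ≤ Real.logb 2 n :=
      Real.logb_le_logb_of_le (b := 2) (by norm_num) (by norm_num) (by exact_mod_cast hn)
    simpa [Real.logb_self_eq_one] using this
  set B : ℝ := ((ℓ : ℝ) + 1) * L + (ℓ : ℝ) ^ 2 + 1 with hBdef
  have hB1 : (1 : ℝ) < B := by nlinarith
  have hBpos : (0 : ℝ) < B := by linarith
  have h2ℓ : ((ℓ : ℝ) ^ 2 + ℓ + 2) ≤ 2 ^ ℓ * 2 := by
    have h := aux_pow ℓ hℓ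
    have h' : ((ℓ ^ 2 + ℓ + 2 : ℕ) : ℝ) ≤ ((2 ^ (ℓ + 1) : ℕ) : ℝ) := by exact_mod_cast h
    push_cast at h'
    have hc : (2 : ℝ) ^ (ℓ + 1) = 2 ^ ℓ * 2 := pow_succ 2 ℓ
    linarith [h', hc.le]
  have hbern : 1 + L ≤ (2 : ℝ) ^ L := by
    have h := one_add_mul_self_le_rpow_one_add (s := 1) (by norm_num) hL
    norm_num at h
    linarith [h]
  have hpow_pos : (0 : ℝ) < (2 : ℝ) ^ ℓ := by positivity
  have hℓpow : (ℓ : ℝ) + 1 ≤ 2 ^ ℓ := by nlinarith [h2ℓ, hℓ1]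
  have hkey : B ≤ (2 : ℝ) ^ (L + (ℓ : ℝ)) := by
    have hr : (2 : ℝ) ^ (L + (ℓ : ℝ)) = (2 : ℝ) ^ L * (2 : ℝ) ^ (ℓ : ℕ) := by
      rw [Real.rpow_add (by norm_num), Real.rpow_natCast]
    rw [hr]
    have hprod : 0 ≤ (L - 1) * ((2 : ℝ) ^ ℓ - ℓ - 1) :=
      mul_nonneg (by linarith) (by linarith)
    have hmul : (1 + L) * 2 ^ ℓ ≤ (2 : ℝ) ^ L * 2 ^ ℓ :=
      mul_le_mul_of_nonneg_right hbern (le_of_lt hpow_pos)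
    nlinarith [hprod, hmul, h2ℓ]
  have hlogB : Real.logb 2 B ≤ L + (ℓ : ℝ) :=
    (Real.logb_le_iff_le_rpow (by norm_num) hBpos).2 hkey
  have hlogx : Real.logb 2 x = (ℓ : ℝ) * Real.logb 2 B := by
    rw [hx, Real.logb_pow]
  have hstep : L + Real.logb 2 x + 1 ≤ B := by
    rw [hlogx]
    have h := mul_le_mul_of_nonneg_left hlogB (by positivity : (0 : ℝ) ≤ (ℓ : ℝ))
    nlinarith [h]
  have hnonneg : (0 : ℝ) ≤ L + Real.logb 2 x + 1 := by
    rw [hlogx]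
    have hlogBpos : 0 ≤ Real.logb 2 B := Real.logb_nonneg (by norm_num) (le_of_lt hB1)
    positivity
  calc (L + Real.logb 2 x + 1) ^ ℓ ≤ B ^ ℓ := pow_le_pow_left₀ hnonneg hstep ℓ
    _ = x := hx.symm
end

section
/- Define W_ℓ(n) := min { q ∈ ℕ : n · ∑_{i=0}^{ℓ} C(q,i) ≤ 2^q }. Then for all natural numbers ℓ ≥ 1 and n ≥ 2, W_ℓ(n) ≥ log₂ n + ℓ·log₂(log₂(2n)) − ℓ·log₂ ℓ. -/
/-!
Every `q` with `n * ∑_{i ≤ ℓ} C(q, i) ≤ 2 ^ q` satisfies the bound, in particular the least one.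
Such a `q` has `2 n ≤ n (1 + q) ≤ 2 ^ q`, i.e. `log₂ (2n) ≤ q`, and `(q / ℓ) ^ ℓ ≤ ∑_{i ≤ ℓ} C(q, i)`
(via `(q / ℓ) ^ ℓ ≤ C(q, ℓ)` when `ℓ ≤ q`). Hence `n (log₂ (2n) / ℓ) ^ ℓ ≤ 2 ^ q`; take `log₂`.
-/

/-- The integer weight (Hamming) bound. -/
noncomputable def weightBound (ℓ n : ℕ) : ℕ :=
  sInf {q : ℕ | n * ∑ i ∈ Finset.range (ℓ + 1), q.choose i ≤ 2 ^ q}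

open Finset Real Filter

namespace Nat

theorem pow_mul_factorial_le_descFactorial_mul_pow {n k : ℕ} (h : k ≤ n) :
    n ^ k * k ! ≤ n.descFactorial k * k ^ k := by
  have hl : n ^ k * k ! = ∏ i ∈ range k, n * (k - i) := by
    rw [prod_mul_distrib, prod_const, card_range, ← descFactorial_self, descFactorial_eq_prod_range]
  have hr : n.descFactorial k * k ^ k = ∏ i ∈ range k, (n - i) * k := by
    rw [prod_mul_distrib, prod_const, card_range, descFactorial_eq_prod_range]
  rw [hl, hr]
  refine prod_le_prod' fun i hi => ?_
  have hik : i < k := mem_range.mp hi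
  -- `n (k - i) ≤ (n - i) k` is `i k ≤ i n`
  zify [hik.le, hik.le.trans h]
  nlinarith [mul_le_mul_of_nonneg_left (show (k : ℤ) ≤ n by exact_mod_cast h) (Int.natCast_nonneg i)]

theorem pow_le_choose_mul_pow {n k : ℕ} (h : k ≤ n) : n ^ k ≤ n.choose k * k ^ k := by
  have := pow_mul_factorial_le_descFactorial_mul_pow h
  rw [descFactorial_eq_factorial_mul_choose, mul_assoc, mul_comm] at this
  exact Nat.le_of_mul_le_mul_left this k.factorial_pos

theorem div_pow_le_choose {n k : ℕ} (h : k ≤ n) : ((n : ℝ) / k) ^ k ≤ n.choose k := by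
  rcases k.eq_zero_or_pos with rfl | hk
  · simp
  rw [div_pow, div_le_iff₀ (by positivity)]
  exact_mod_cast pow_le_choose_mul_pow h

theorem div_pow_le_sum_range_choose (n k : ℕ) :
    ((n : ℝ) / k) ^ k ≤ ∑ i ∈ range (k + 1), (n.choose i : ℝ) := by
  rcases le_or_gt k n with h | h
  · exact (div_pow_le_choose h).trans
      (single_le_sum (f := fun i => (n.choose i : ℝ)) (fun i _ => by positivity)
        (self_mem_range_succ k))
  · calc ((n : ℝ) / k) ^ k ≤ 1 := by
          refine pow_le_one₀ (by positivity) (div_le_one_of_le₀ ?_ (by positivity))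
          exact_mod_cast h.le
      _ = n.choose 0 := by simp
      _ ≤ _ := single_le_sum (f := fun i => (n.choose i : ℝ)) (fun i _ => by positivity) (by simp)

theorem exists_mul_sum_range_choose_le_two_pow (ℓ n : ℕ) :
    ∃ q : ℕ, n * ∑ i ∈ range (ℓ + 1), q.choose i ≤ 2 ^ q := by
  have hlim : Tendsto (fun q : ℕ => (n * (ℓ + 1) : ℝ) * ((q : ℝ) ^ ℓ / 2 ^ q)) atTop (nhds 0) := by
    simpa using (tendsto_pow_const_div_const_pow_of_one_lt ℓ one_lt_two).const_mul _
  obtain ⟨q, hq1, hlt⟩ :=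
    ((eventually_ge_atTop 1).and (hlim.eventually_lt_const zero_lt_one)).exists
  refine ⟨q, ?_⟩
  have hsum : ∑ i ∈ range (ℓ + 1), q.choose i ≤ (ℓ + 1) * q ^ ℓ := by
    simpa using sum_le_card_nsmul (range (ℓ + 1)) _ _ fun i hi =>
      (choose_le_pow q i).trans (Nat.pow_le_pow_right hq1 (mem_range_succ_iff.mp hi))
  have : n * ((ℓ + 1) * q ^ ℓ) ≤ 2 ^ q := by
    rw [mul_div_assoc', div_lt_one (by positivity)] at hlt
    exact_mod_cast (by linarith : (n * ((ℓ + 1) * q ^ ℓ) : ℝ) ≤ 2 ^ q)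
  exact (Nat.mul_le_mul_left n hsum).trans this

end Nat

theorem weightBound_mem (ℓ n : ℕ) :
    n * ∑ i ∈ range (ℓ + 1), (weightBound ℓ n).choose i ≤ 2 ^ weightBound ℓ n :=
  Nat.sInf_mem (Nat.exists_mul_sum_range_choose_le_two_pow ℓ n)

theorem two_mul_le_two_pow_of_mul_sum_range_choose_le {ℓ n q : ℕ} (hℓ : 1 ≤ ℓ) (hn : 2 ≤ n)
    (hq : n * ∑ i ∈ range (ℓ + 1), q.choose i ≤ 2 ^ q) : 2 * n ≤ 2 ^ q := by
  have hsub : ∑ i ∈ range 2, q.choose i ≤ ∑ i ∈ range (ℓ + 1), q.choose i :=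
    sum_le_sum_of_subset (range_subset_range.mpr (by omega))
  have h1q : n * (1 + q) ≤ 2 ^ q := by
    simpa [sum_range_succ] using (Nat.mul_le_mul_left n hsub).trans hq
  rcases q.eq_zero_or_pos with rfl | hq0
  · omega
  · nlinarith

theorem logb_bound_le_of_mul_sum_range_choose_le {ℓ n q : ℕ} (hℓ : 1 ≤ ℓ) (hn : 2 ≤ n)
    (hq : n * ∑ i ∈ range (ℓ + 1), q.choose i ≤ 2 ^ q) :
    logb 2 n + ℓ * logb 2 (logb 2 (2 * n)) - ℓ * logb 2 ℓ ≤ q := by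
  have hnR : (2 : ℝ) ≤ n := by exact_mod_cast hn
  have hℓR : (0 : ℝ) < ℓ := by exact_mod_cast hℓ
  have hL : 0 < logb 2 (2 * n : ℝ) := logb_pos one_lt_two (by linarith)
  have hLq : logb 2 (2 * n : ℝ) ≤ q := by
    rw [logb_le_iff_le_rpow one_lt_two (by positivity), rpow_natCast]
    exact_mod_cast two_mul_le_two_pow_of_mul_sum_range_choose_le hℓ hn hq
  have key : (n : ℝ) * (logb 2 (2 * n) / ℓ) ^ ℓ ≤ 2 ^ (q : ℝ) := calc
    (n : ℝ) * (logb 2 (2 * n) / ℓ) ^ ℓ ≤ n * ((q : ℝ) / ℓ) ^ ℓ := by gcongr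
    _ ≤ n * ∑ i ∈ range (ℓ + 1), (q.choose i : ℝ) := by
      gcongr; exact Nat.div_pow_le_sum_range_choose q ℓ
    _ ≤ 2 ^ (q : ℝ) := by rw [rpow_natCast]; exact_mod_cast hq
  rw [← logb_le_iff_le_rpow one_lt_two (by positivity), logb_mul (by positivity) (by positivity),
    logb_pow, logb_div hL.ne' hℓR.ne'] at key
  linarith

theorem weightBound_lower (ℓ n : ℕ) (hℓ : 1 ≤ ℓ) (hn : 2 ≤ n) :
    Real.logb 2 n + (ℓ : ℝ) * Real.logb 2 (Real.logb 2 (2 * n)) -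
        (ℓ : ℝ) * Real.logb 2 ℓ ≤ (weightBound ℓ n : ℝ) :=
  logb_bound_le_of_mul_sum_range_choose_le hℓ hn (weightBound_mem ℓ n)
end

section
/- Define W_ℓ(n) := min { q ∈ ℕ : n · ∑_{i=0}^{ℓ} C(q,i) ≤ 2^q }. Then for all natural numbers ℓ ≥ 1 and n ≥ 2, W_ℓ(n) ≤ log₂ n + ℓ·log₂(log₂(2n)) + 2ℓ·log₂ ℓ + ℓ + 2 (interpreting ℓ·log₂ ℓ = 0 when ℓ = 1). -/
lemma logb_le_sub_one {t : ℝ} (ht : 2 ≤ t) : Real.logb 2 t ≤ t - 1 := by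
  have hlog2 : (0.6931471803 : ℝ) < Real.log 2 := Real.log_two_gt_d9
  have h1 : Real.log t = Real.log 2 + Real.log (t / 2) := by
    rw [← Real.log_mul (by norm_num) (by positivity)]
    congr 1
    ring
  have h2 : Real.log (t / 2) ≤ t / 2 - 1 :=
    Real.log_le_sub_one_of_pos (by positivity)
  have h3 : Real.log t ≤ (t - 1) * Real.log 2 := by
    nlinarith [h1, h2, hlog2]
  rw [Real.logb, div_le_iff₀ (by positivity)]
  linarith

lemma sum_choose_le_pow (ℓ q : ℕ) :
    ∑ i ∈ Finset.range (ℓ + 1), q.choose i ≤ (q + 1) ^ ℓ := by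
  induction ℓ with
  | zero => simp
  | succ ℓ ih =>
      rw [Finset.sum_range_succ]
      have h1 : q.choose (ℓ + 1) ≤ q ^ (ℓ + 1) := Nat.choose_le_pow _ _
      have h2 : q ^ (ℓ + 1) ≤ q * (q + 1) ^ ℓ := by
        rw [pow_succ']
        exact Nat.mul_le_mul_left q (Nat.pow_le_pow_left (Nat.le_succ q) ℓ)
      calc ∑ i ∈ Finset.range (ℓ + 1), q.choose i + q.choose (ℓ + 1)
          ≤ (q + 1) ^ ℓ + q * (q + 1) ^ ℓ := by
            exact Nat.add_le_add ih (le_trans h1 h2)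
        _ = (q + 1) ^ (ℓ + 1) := by ring

theorem weightBound_upper (ℓ n : ℕ) (hℓ : 1 ≤ ℓ) (hn : 2 ≤ n) :
    (weightBound ℓ n : ℝ) ≤ Real.logb 2 n + (ℓ : ℝ) * Real.logb 2 (Real.logb 2 (2 * n)) +
      2 * (ℓ : ℝ) * Real.logb 2 ℓ + (ℓ : ℝ) + 2 := by
  have hn0 : (0 : ℝ) < n := by positivity
  set x : ℝ := Real.logb 2 n with hxdef
  have hx : (1 : ℝ) ≤ x := by
    rw [show (1:ℝ) = Real.logb 2 2 from (Real.logb_self_eq_one one_lt_two).symm]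
    exact Real.logb_le_logb_of_le one_lt_two (by norm_num) (by exact_mod_cast hn)
  have hL : Real.logb 2 (2 * (n : ℝ)) = 1 + x := by
    rw [Real.logb_mul (by norm_num) (by positivity),
      Real.logb_self_eq_one one_lt_two]
  have hlℓ : (0 : ℝ) ≤ Real.logb 2 ℓ := by
    apply Real.logb_nonneg one_lt_two
    exact_mod_cast hℓ
  have hℓ1 : (1 : ℝ) ≤ (ℓ : ℝ) := by exact_mod_cast hℓ
  set R : ℝ := x + (ℓ : ℝ) * Real.logb 2 (Real.logb 2 (2 * n)) +
      2 * (ℓ : ℝ) * Real.logb 2 ℓ + (ℓ : ℝ) + 2 with hRdef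
  have hRn : Real.logb 2 (2 * (n : ℝ)) = 1 + x := hL
  have hlogL : Real.logb 2 (Real.logb 2 (2 * n)) = Real.logb 2 (1 + x) := by
    push_cast
    rw [hL]
  have hlogL_le : Real.logb 2 (1 + x) ≤ x := by
    have := logb_le_sub_one (t := 1 + x) (by linarith)
    linarith
  have hR0 : (0 : ℝ) ≤ R := by
    rw [hRdef, hlogL]
    have h1x : (0:ℝ) ≤ Real.logb 2 (1 + x) :=
      Real.logb_nonneg one_lt_two (by linarith)
    nlinarith
  set q : ℕ := Nat.floor R with hqdef
  have hqR : (q : ℝ) ≤ R := Nat.floor_le hR0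
  have hqR' : R - 1 < (q : ℝ) := Nat.sub_one_lt_floor R
  -- key inequality
  have hkey : x + (ℓ : ℝ) * Real.logb 2 ((q : ℝ) + 1) ≤ (q : ℝ) := by
    have hmain : (ℓ : ℝ) * Real.logb 2 ((q : ℝ) + 1) ≤
        (ℓ : ℝ) * Real.logb 2 (1 + x) + 2 * (ℓ : ℝ) * Real.logb 2 ℓ + (ℓ : ℝ) + 1 := by
      rcases eq_or_lt_of_le hℓ with h1 | h2
      · -- ℓ = 1
        subst h1
        simp only [Nat.cast_one, one_mul, mul_one, Real.logb_one] at *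
        have hq4 : (q : ℝ) + 1 ≤ 4 * (1 + x) := by
          have hR1 : R ≤ x + Real.logb 2 (1 + x) + 3 := by
            rw [hRdef, hlogL]; push_cast; linarith
          linarith [hlogL_le, hqR, hx]
        have hmono : Real.logb 2 ((q : ℝ) + 1) ≤ Real.logb 2 (4 * (1 + x)) :=
          Real.logb_le_logb_of_le one_lt_two (by positivity) hq4
        have h4 : Real.logb 2 (4 * (1 + x)) = 2 + Real.logb 2 (1 + x) := by
          rw [Real.logb_mul (by norm_num) (by positivity)]
          have : Real.logb 2 (4:ℝ) = 2 := by
            rw [show (4:ℝ) = 2 ^ (2:ℕ) by norm_num, Real.logb_pow,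
              Real.logb_self_eq_one one_lt_two]
            norm_num
          rw [this]
        linarith
      · -- ℓ ≥ 2
        have hℓn2 : (2 : ℕ) ≤ ℓ := h2
        have hℓ2 : (2 : ℝ) ≤ (ℓ : ℝ) := by exact_mod_cast hℓn2
        have hll : Real.logb 2 (ℓ : ℝ) ≤ (ℓ : ℝ) - 1 := logb_le_sub_one hℓ2
        have hℓ0 : (0 : ℝ) ≤ (ℓ : ℝ) := by linarith
        have hq2 : (q : ℝ) + 1 ≤ 2 * (1 + x) * (ℓ : ℝ) ^ 2 := by
          have hR1 : R = x + (ℓ : ℝ) * Real.logb 2 (1 + x) +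
              2 * (ℓ : ℝ) * Real.logb 2 ℓ + (ℓ : ℝ) + 2 := by rw [hRdef, hlogL]
          have h5 : (ℓ : ℝ) * Real.logb 2 (1 + x) ≤ (ℓ : ℝ) * x :=
            mul_le_mul_of_nonneg_left hlogL_le hℓ0
          have h6 : 2 * (ℓ : ℝ) * Real.logb 2 ℓ ≤ 2 * (ℓ : ℝ) * ((ℓ : ℝ) - 1) :=
            mul_le_mul_of_nonneg_left hll (by linarith)
          have hpos : (0 : ℝ) ≤ 2 * (ℓ : ℝ) ^ 2 - (ℓ : ℝ) - 1 := by nlinarith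
          have h7 : 1 * (2 * (ℓ : ℝ) ^ 2 - (ℓ : ℝ) - 1) ≤
              x * (2 * (ℓ : ℝ) ^ 2 - (ℓ : ℝ) - 1) :=
            mul_le_mul_of_nonneg_right hx hpos
          nlinarith [hqR]
        have hlog_le : Real.logb 2 ((q : ℝ) + 1) ≤
            Real.logb 2 (2 * (1 + x) * (ℓ : ℝ) ^ 2) :=
          Real.logb_le_logb_of_le one_lt_two (by positivity) hq2
        have hsplit : Real.logb 2 (2 * (1 + x) * (ℓ : ℝ) ^ 2) =
            1 + Real.logb 2 (1 + x) + 2 * Real.logb 2 ℓ := by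
          rw [Real.logb_mul (by positivity) (by positivity),
            Real.logb_mul (by norm_num) (by positivity),
            Real.logb_self_eq_one one_lt_two, Real.logb_pow]
          ring
        rw [hsplit] at hlog_le
        have h8 : (ℓ : ℝ) * Real.logb 2 ((q : ℝ) + 1) ≤
            (ℓ : ℝ) * (1 + Real.logb 2 (1 + x) + 2 * Real.logb 2 ℓ) :=
          mul_le_mul_of_nonneg_left hlog_le hℓ0
        nlinarith [h8]
    have hR1 : R = x + (ℓ : ℝ) * Real.logb 2 (1 + x) +
        2 * (ℓ : ℝ) * Real.logb 2 ℓ + (ℓ : ℝ) + 2 := by rw [hRdef, hlogL]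
    linarith
  -- membership
  have hmem : n * ∑ i ∈ Finset.range (ℓ + 1), q.choose i ≤ 2 ^ q := by
    have h1 : n * ∑ i ∈ Finset.range (ℓ + 1), q.choose i ≤ n * (q + 1) ^ ℓ :=
      Nat.mul_le_mul_left n (sum_choose_le_pow ℓ q)
    refine le_trans h1 ?_
    have hreal : (n : ℝ) * ((q : ℝ) + 1) ^ ℓ ≤ 2 ^ q := by
      have heq : (n : ℝ) * ((q : ℝ) + 1) ^ ℓ =
          (2 : ℝ) ^ (x + (ℓ : ℝ) * Real.logb 2 ((q : ℝ) + 1)) := by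
        rw [Real.rpow_add two_pos, hxdef, Real.rpow_logb two_pos (by norm_num) hn0]
        congr 1
        rw [← Real.logb_pow, Real.rpow_logb two_pos (by norm_num) (by positivity)]
      rw [heq]
      calc (2 : ℝ) ^ (x + (ℓ : ℝ) * Real.logb 2 ((q : ℝ) + 1))
          ≤ (2 : ℝ) ^ ((q : ℝ)) := Real.rpow_le_rpow_of_exponent_le one_le_two hkey
        _ = 2 ^ q := by rw [Real.rpow_natCast]
    have := hreal
    rw [← Nat.cast_le (α := ℝ)]
    push_cast
    convert this using 2
  have hle : weightBound ℓ n ≤ q := Nat.sInf_le hmem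
  calc (weightBound ℓ n : ℝ) ≤ (q : ℝ) := by exact_mod_cast hle
    _ ≤ R := hqR
    _ = _ := by rw [hRdef]
end
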